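/- arXiv:1706.09052 — 2 statements merged into one kernel-verified Lean document; each statement's English description precedes it below -/
import Mathlib

section
/- Let G be a finite simple graph with an edge uv, and let G' be the graph obtained from G by subdividing the edge uv twice, i.e., by deleting the edge uv and adding two new vertices x and y together with the edges ux, xy and yv. Then G has a forced vertex if and only if G' has a forced vertex. -/
open SimpleGraph

universe u
variable {V : Type*} {W : Type*}

/-- `H` is isomorphic to an induced subgraph of `G`. -/
def SimpleGraph.IsIndSubgraph {W V : Type*} (H : SimpleGraph W) (G : SimpleGraph V) : Prop :=
  ∃ f : W ↪ V, ∀ a b, G.Adj (f a) (f b) ↔ H.Adj a b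

/-- A set of pairwise non-adjacent vertices. -/
def SimpleGraph.IsIndepSet' (G : SimpleGraph V) (s : Set V) : Prop :=
  s.Pairwise fun a b => ¬ G.Adj a b

/-- The independence number of `G`. -/
noncomputable def SimpleGraph.indepNum' (G : SimpleGraph V) : ℕ :=
  sSup {n | ∃ s : Set V, G.IsIndepSet' s ∧ s.ncard = n}

/-- A matching, viewed as a set of pairwise disjoint edges of `G`. -/
def SimpleGraph.IsMatchingSet (G : SimpleGraph V) (M : Set (Sym2 V)) : Prop :=
  M ⊆ G.edgeSet ∧ M.Pairwise fun e f => ∀ x, x ∈ e → x ∉ f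

/-- The matching number of `G`. -/
noncomputable def SimpleGraph.matchingNum (G : SimpleGraph V) : ℕ :=
  sSup {n | ∃ M : Set (Sym2 V), G.IsMatchingSet M ∧ M.ncard = n}

/-- A vertex cover. -/
def SimpleGraph.IsVertexCover' (G : SimpleGraph V) (C : Set V) : Prop :=
  ∀ u v, G.Adj u v → u ∈ C ∨ v ∈ C

/-- Contraction of the edge `uv`, identifying the new vertex with `v`. -/
def SimpleGraph.contractEdge (G : SimpleGraph V) (u v : V) : SimpleGraph {x : V // x ≠ u} where
  Adj x y := x ≠ y ∧ (G.Adj x y ∨ (x.1 = v ∧ G.Adj u y) ∨ (y.1 = v ∧ G.Adj u x))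
  symm := ⟨by
    rintro x y ⟨hne, h⟩
    refine ⟨hne.symm, ?_⟩
    rcases h with h | h | h
    · exact Or.inl h.symm
    · exact Or.inr (Or.inr h)
    · exact Or.inr (Or.inl h)⟩
  loopless := ⟨fun x h => h.1 rfl⟩

/-- A maximal clique. -/
def SimpleGraph.IsMaxlClique (G : SimpleGraph V) (K : Set V) : Prop :=
  G.IsClique K ∧ ∀ K' : Set V, G.IsClique K' → K ⊆ K' → K' = K

/-- The graph obtained from `G` by subdividing the edge `uv` twice: the edge `uv` is removed and
two new vertices `x = Sum.inr 0` and `y = Sum.inr 1` are added, together with the edges `ux`,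
`xy` and `yv`. -/
def SimpleGraph.subdivideTwice (G : SimpleGraph V) (u v : V) : SimpleGraph (V ⊕ Fin 2) where
  Adj a b :=
    match a, b with
    | Sum.inl a, Sum.inl b => G.Adj a b ∧ ¬(a = u ∧ b = v) ∧ ¬(a = v ∧ b = u)
    | Sum.inl a, Sum.inr i => (i = 0 ∧ a = u) ∨ (i = 1 ∧ a = v)
    | Sum.inr i, Sum.inl b => (i = 0 ∧ b = u) ∨ (i = 1 ∧ b = v)
    | Sum.inr i, Sum.inr j => i ≠ j
  symm := ⟨by
    rintro (a | i) (b | j) h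
    · exact ⟨h.1.symm, fun hc => h.2.2 ⟨hc.2, hc.1⟩, fun hc => h.2.1 ⟨hc.2, hc.1⟩⟩
    · exact h
    · exact h
    · exact h.symm⟩
  loopless := ⟨by
    rintro (a | i) h
    · exact G.loopless.irrefl a h.1
    · exact h rfl⟩

/-- A vertex is forced if it belongs to every maximum independent set. -/
def SimpleGraph.IsForcedVertex (G : SimpleGraph V) (w : V) : Prop :=
  ∀ I : Set V, G.IsIndepSet' I → I.ncard = G.indepNum' → w ∈ I

/-!
An independent set of `G` misses `u` or `v`, so it extends to the subdivided graph by the new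
vertex next to the missed endpoint. Conversely, an independent set of the subdivided graph loses at
most one vertex on restriction to `V` (the vertex `v` if it contains both `u` and `v`, otherwise at
most one of the two new adjacent vertices). Hence `α(G') = α(G) + 1`, and both operations send
maximum independent sets to maximum independent sets; a forced vertex of `G` stays forced, and a
forced new vertex of `G'` forces the endpoint of `uv` on the far side of it.
-/

theorem Set.ncard_eq_ncard_preimage_inl_add_ncard_preimage_inr {α β : Type*} [Finite α]
    [Finite β] (s : Set (α ⊕ β)) :
    s.ncard = (Sum.inl ⁻¹' s).ncard + (Sum.inr ⁻¹' s).ncard := by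
  conv_lhs => rw [← Set.image_preimage_inl_union_image_preimage_inr s]
  rw [Set.ncard_union_eq Set.disjoint_image_inl_image_inr,
    Set.ncard_image_of_injective _ Sum.inl_injective,
    Set.ncard_image_of_injective _ Sum.inr_injective]

namespace SimpleGraph

variable {G : SimpleGraph V} {u v : V}

theorem subdivideTwice_adj_inl_inr {a : V} {i : Fin 2} :
    (G.subdivideTwice u v).Adj (Sum.inl a) (Sum.inr i) ↔ a = ![u, v] i := by
  fin_cases i <;> simp [subdivideTwice]

theorem IsIndepSet'.exists_notMem_of_adj {I : Set V} (hI : G.IsIndepSet' I)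
    (huv : G.Adj u v) : ∃ i : Fin 2, ![u, v] i ∉ I := by
  by_contra! h
  exact hI (h 0) (h 1) huv.ne huv

theorem IsIndepSet'.insert_inr_subdivideTwice {I : Set V} (hI : G.IsIndepSet' I) {i : Fin 2}
    (hi : ![u, v] i ∉ I) :
    (G.subdivideTwice u v).IsIndepSet' (insert (Sum.inr i) (Sum.inl '' I)) := by
  have hinl : ∀ a ∈ I, ¬(G.subdivideTwice u v).Adj (Sum.inl a) (Sum.inr i) := by
    rintro a ha hadj
    exact hi (subdivideTwice_adj_inl_inr.1 hadj ▸ ha)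
  rintro _ (rfl | ⟨a, ha, rfl⟩) _ (rfl | ⟨b, hb, rfl⟩) hne hadj
  · exact hne rfl
  · exact hinl b hb hadj.symm
  · exact hinl a ha hadj
  · exact hI ha hb (fun h => hne (congrArg _ h)) hadj.1

theorem IsIndepSet'.isIndepSet'_of_subset_preimage_inl {I : Set (V ⊕ Fin 2)}
    (hI : (G.subdivideTwice u v).IsIndepSet' I) {S : Set V} (hS : S ⊆ Sum.inl ⁻¹' I)
    (huv : ¬(u ∈ S ∧ v ∈ S)) : G.IsIndepSet' S := by
  intro a ha b hb hne hadj
  refine hI (hS ha) (hS hb) (fun h => hne (Sum.inl_injective h)) ⟨hadj, ?_, ?_⟩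
  · rintro ⟨rfl, rfl⟩
    exact huv ⟨ha, hb⟩
  · rintro ⟨rfl, rfl⟩
    exact huv ⟨hb, ha⟩

theorem IsIndepSet'.ncard_preimage_inr_subdivideTwice_le_one {I : Set (V ⊕ Fin 2)}
    (hI : (G.subdivideTwice u v).IsIndepSet' I) : (Sum.inr ⁻¹' I).ncard ≤ 1 :=
  Set.ncard_le_one_iff_subsingleton.2 fun _ hi _ hj =>
    by_contra fun hne => hI hi hj (fun h => hne (Sum.inr_injective h)) hne

theorem IsIndepSet'.preimage_inr_subdivideTwice_eq_empty {I : Set (V ⊕ Fin 2)}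
    (hI : (G.subdivideTwice u v).IsIndepSet' I) (hu : Sum.inl u ∈ I) (hv : Sum.inl v ∈ I) :
    Sum.inr ⁻¹' I = ∅ := by
  refine Set.eq_empty_of_forall_notMem fun i hi => ?_
  have hadj : ∀ a : V, Sum.inl a ∈ I → ¬(G.subdivideTwice u v).Adj (Sum.inl a) (Sum.inr i) :=
    fun a ha => hI ha hi Sum.inl_ne_inr
  fin_cases i
  · exact hadj _ hu (subdivideTwice_adj_inl_inr.2 rfl)
  · exact hadj _ hv (subdivideTwice_adj_inl_inr.2 rfl)

variable [Finite V]

theorem bddAbove_ncard_isIndepSet' (G : SimpleGraph V) :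
    BddAbove {n | ∃ s : Set V, G.IsIndepSet' s ∧ s.ncard = n} := by
  refine ⟨Nat.card V, ?_⟩
  rintro n ⟨s, -, rfl⟩
  exact Set.ncard_le_card s

theorem IsIndepSet'.ncard_le_indepNum' {s : Set V} (h : G.IsIndepSet' s) :
    s.ncard ≤ G.indepNum' :=
  le_csSup G.bddAbove_ncard_isIndepSet' ⟨s, h, rfl⟩

theorem exists_isIndepSet'_ncard_eq_indepNum' (G : SimpleGraph V) :
    ∃ s : Set V, G.IsIndepSet' s ∧ s.ncard = G.indepNum' :=
  Nat.sSup_mem (s := {n | ∃ s : Set V, G.IsIndepSet' s ∧ s.ncard = n})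
    ⟨0, ∅, Set.pairwise_empty _, Set.ncard_empty V⟩ G.bddAbove_ncard_isIndepSet'

theorem IsIndepSet'.exists_restrict_subdivideTwice {I : Set (V ⊕ Fin 2)}
    (hI : (G.subdivideTwice u v).IsIndepSet' I) :
    ∃ S : Set V, G.IsIndepSet' S ∧ S ⊆ Sum.inl ⁻¹' I ∧ I.ncard ≤ S.ncard + 1 := by
  have hsplit := I.ncard_eq_ncard_preimage_inl_add_ncard_preimage_inr
  by_cases huv : Sum.inl u ∈ I ∧ Sum.inl v ∈ I
  · -- Both endpoints lie in `I`, so no new vertex does; dropping `v` restores independence in `G`.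
    refine ⟨Sum.inl ⁻¹' I \ {v}, hI.isIndepSet'_of_subset_preimage_inl Set.sdiff_subset
      fun h => h.2.2 rfl, Set.sdiff_subset, ?_⟩
    rw [hsplit, hI.preimage_inr_subdivideTwice_eq_empty huv.1 huv.2, Set.ncard_empty,
      add_zero, Set.ncard_sdiff_singleton_add_one (s := Sum.inl ⁻¹' I) huv.2]
  · refine ⟨Sum.inl ⁻¹' I, hI.isIndepSet'_of_subset_preimage_inl subset_rfl huv, subset_rfl, ?_⟩
    have := hI.ncard_preimage_inr_subdivideTwice_le_one
    omega

theorem ncard_insert_inr_image_inl (I : Set V) (i : Fin 2) :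
    (insert (Sum.inr i) (Sum.inl '' I) : Set (V ⊕ Fin 2)).ncard = I.ncard + 1 := by
  rw [Set.ncard_insert_of_notMem (by simp), Set.ncard_image_of_injective _ Sum.inl_injective]

theorem indepNum'_subdivideTwice (huv : G.Adj u v) :
    (G.subdivideTwice u v).indepNum' = G.indepNum' + 1 := by
  apply le_antisymm
  · obtain ⟨I, hI, hcard⟩ := (G.subdivideTwice u v).exists_isIndepSet'_ncard_eq_indepNum'
    obtain ⟨S, hS, -, hle⟩ := hI.exists_restrict_subdivideTwice
    have := hS.ncard_le_indepNum'
    omega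
  · obtain ⟨I, hI, hcard⟩ := G.exists_isIndepSet'_ncard_eq_indepNum'
    obtain ⟨i, hi⟩ := hI.exists_notMem_of_adj huv
    simpa [ncard_insert_inr_image_inl, hcard] using
      (hI.insert_inr_subdivideTwice hi).ncard_le_indepNum'

theorem IsForcedVertex.inl_subdivideTwice {w : V} (hw : G.IsForcedVertex w) (huv : G.Adj u v) :
    (G.subdivideTwice u v).IsForcedVertex (Sum.inl w) := by
  intro I hI hcard
  obtain ⟨S, hS, hSI, hle⟩ := hI.exists_restrict_subdivideTwice
  rw [indepNum'_subdivideTwice huv] at hcard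
  have := hS.ncard_le_indepNum'
  exact hSI (hw S hS (by omega))

theorem IsForcedVertex.mem_insert_inr_image_inl {w : V ⊕ Fin 2}
    (hw : (G.subdivideTwice u v).IsForcedVertex w) (huv : G.Adj u v) {I : Set V}
    (hI : G.IsIndepSet' I) (hcard : I.ncard = G.indepNum') {i : Fin 2} (hi : ![u, v] i ∉ I) :
    w ∈ insert (Sum.inr i) (Sum.inl '' I) :=
  hw _ (hI.insert_inr_subdivideTwice hi)
    (by rw [ncard_insert_inr_image_inl, hcard, indepNum'_subdivideTwice huv])

theorem IsForcedVertex.of_inl_subdivideTwice {w : V}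
    (hw : (G.subdivideTwice u v).IsForcedVertex (Sum.inl w)) (huv : G.Adj u v) :
    G.IsForcedVertex w := by
  intro I hI hcard
  obtain ⟨i, hi⟩ := hI.exists_notMem_of_adj huv
  simpa using hw.mem_insert_inr_image_inl huv hI hcard hi

theorem IsForcedVertex.of_inr_subdivideTwice {i : Fin 2}
    (hw : (G.subdivideTwice u v).IsForcedVertex (Sum.inr i)) (huv : G.Adj u v) :
    G.IsForcedVertex (![u, v] i.rev) := by
  intro I hI hcard
  by_contra hi
  have := hw.mem_insert_inr_image_inl huv hI hcard hi
  fin_cases i <;> simp at this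

end SimpleGraph

/-- `G` has a forced vertex iff the graph obtained from `G` by subdividing the
edge `uv` twice has a forced vertex. -/
theorem stmt6 {V : Type*} [Fintype V] (G : SimpleGraph V) (u v : V) (huv : G.Adj u v) :
    (∃ w, G.IsForcedVertex w) ↔ ∃ w, (G.subdivideTwice u v).IsForcedVertex w := by
  constructor
  · rintro ⟨w, hw⟩
    exact ⟨Sum.inl w, hw.inl_subdivideTwice huv⟩
  · rintro ⟨w | i, hw⟩
    · exact ⟨w, hw.of_inl_subdivideTwice huv⟩
    · exact ⟨_, hw.of_inr_subdivideTwice huv⟩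
end

section
/- Let G be a C4-free finite simple graph and let uv be an edge of G. Then ω(G/uv) ≤ ω(G). Moreover, if every maximum clique of G contains both u and v, then ω(G/uv) = ω(G) − 1. -/
open SimpleGraph

universe u
variable {V : Type*} {W : Type*}

/-!
Lift a clique `K` of `G/uv` back to `G`. If every other member of `K` is adjacent to `v` in `G`
(in particular if the merged vertex is not in `K`), then `K` itself is a clique of `G` avoiding `u`.
Otherwise some member `b` is adjacent to `u` but not to `v`, and then every other member `a` is
adjacent to `u`, since otherwise `u v a b` would be an induced `C4`; so putting `u` in place of the
merged vertex gives a clique of `G` avoiding `v`. Hence `ω(G/uv) ≤ ω(G)`, with strict inequality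
when every maximum clique contains `u` and `v`; deleting `u` from a maximum clique of `G` gives
`ω(G) - 1 ≤ ω(G/uv)`.
-/

namespace SimpleGraph

open Finset

theorem IsNClique.map_of_comap {α β : Type*} {G : SimpleGraph β} {f : α ↪ β} {n : ℕ}
    {s : Finset α} (h : (G.comap f).IsNClique n s) : G.IsNClique n (s.map f) :=
  h.map.mono (map_comap_le f G)

variable {G : SimpleGraph V}

theorem adj_or_adj_of_not_isIndSubgraph_cycleGraph_four
    (hC4 : ¬ (cycleGraph 4).IsIndSubgraph G) {a b c d : V}
    (hab : G.Adj a b) (hbc : G.Adj b c) (hcd : G.Adj c d) (hda : G.Adj d a)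
    (hac : a ≠ c) (hbd : b ≠ d) : G.Adj a c ∨ G.Adj b d := by
  by_contra! ⟨hac', hbd'⟩
  have hca' : ¬ G.Adj c a := fun h => hac' h.symm
  have hdb' : ¬ G.Adj d b := fun h => hbd' h.symm
  have hinj : Function.Injective ![a, b, c, d] := by
    intro i j hij
    fin_cases i <;> fin_cases j <;>
      simp_all [hab.ne, hbc.ne, hcd.ne, hda.ne, hab.ne.symm, hbc.ne.symm, hcd.ne.symm, hda.ne.symm,
        hac.symm, hbd.symm]
  refine hC4 ⟨⟨![a, b, c, d], hinj⟩, fun i j => ?_⟩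
  fin_cases i <;> fin_cases j <;>
    simp [cycleGraph_adj, hab, hbc, hcd, hda, hab.symm, hbc.symm, hcd.symm, hda.symm, hac', hbd',
      hca', hdb'] <;> decide

variable {u v : V}

variable (G) in
theorem comap_subtype_le_contractEdge :
    G.comap (Function.Embedding.subtype (· ≠ u)) ≤ G.contractEdge u v :=
  fun _ _ h => ⟨h.ne, Or.inl h⟩

theorem adj_of_contractEdge_adj_of_ne {x y : {x : V // x ≠ u}} (hx : x.1 ≠ v) (hy : y.1 ≠ v)
    (h : (G.contractEdge u v).Adj x y) : G.Adj x y := by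
  rcases h.2 with h | ⟨hx', -⟩ | ⟨hy', -⟩
  exacts [h, absurd hx' hx, absurd hy' hy]

theorem adj_or_adj_of_contractEdge_adj {x y : {x : V // x ≠ u}} (hx : x.1 = v)
    (h : (G.contractEdge u v).Adj x y) : G.Adj v y ∨ G.Adj u y := by
  rcases h.2 with h | ⟨-, h⟩ | ⟨hy, -⟩
  · exact Or.inl (hx ▸ h)
  · exact Or.inr h
  · exact absurd (Subtype.ext (hx.trans hy.symm)) h.1

variable {s : Set {x : V // x ≠ u}}

theorem isClique_comap_subtype_of_contractEdge (hs : (G.contractEdge u v).IsClique s)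
    (hv : ∀ x ∈ s, x.1 = v → ∀ y ∈ s, x ≠ y → G.Adj v y) :
    (G.comap (Function.Embedding.subtype (· ≠ u))).IsClique s := by
  intro x hx y hy hxy
  simp only [comap_adj, Function.Embedding.coe_subtype]
  rcases (hs hx hy hxy).2 with h | ⟨hxv, -⟩ | ⟨hyv, -⟩
  · exact h
  · exact hxv ▸ hv x hx hxv y hy hxy
  · exact hyv ▸ (hv y hy hyv x hx hxy.symm).symm

theorem isClique_comap_swap_of_contractEdge [DecidableEq V]
    (hs : (G.contractEdge u v).IsClique s)
    (hu : ∀ x ∈ s, x.1 = v → ∀ y ∈ s, x ≠ y → G.Adj u y) :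
    (G.comap ((Function.Embedding.subtype (· ≠ u)).trans (Equiv.swap u v).toEmbedding)).IsClique
      s := by
  have hswap : ∀ x ∈ s, ∀ y ∈ s, x ≠ y → x.1 = v →
      G.Adj (Equiv.swap u v x) (Equiv.swap u v y) := by
    intro x hx y hy hxy hxv
    have hyv : y.1 ≠ v := fun hyv => hxy (Subtype.ext (hxv.trans hyv.symm))
    rw [hxv, Equiv.swap_apply_right, Equiv.swap_apply_of_ne_of_ne y.2 hyv]
    exact hu x hx hxv y hy hxy
  intro x hx y hy hxy
  simp only [comap_adj, Function.Embedding.trans_apply, Function.Embedding.coe_subtype,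
    Equiv.coe_toEmbedding]
  by_cases hxv : x.1 = v
  · exact hswap x hx y hy hxy hxv
  by_cases hyv : y.1 = v
  · exact (hswap y hy x hx hxy.symm hyv).symm
  rw [Equiv.swap_apply_of_ne_of_ne x.2 hxv, Equiv.swap_apply_of_ne_of_ne y.2 hyv]
  exact adj_of_contractEdge_adj_of_ne hxv hyv (hs hx hy hxy)

theorem forall_adj_or_forall_adj_of_contractEdge (hC4 : ¬ (cycleGraph 4).IsIndSubgraph G)
    (huv : G.Adj u v) (hs : (G.contractEdge u v).IsClique s) :
    (∀ x ∈ s, x.1 = v → ∀ y ∈ s, x ≠ y → G.Adj v y) ∨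
      (∀ x ∈ s, x.1 = v → ∀ y ∈ s, x ≠ y → G.Adj u y) := by
  by_contra! ⟨⟨x, hx, hxv, y, hy, hxy, hvy⟩, ⟨x', hx', hx'v, y', hy', hxy', huy'⟩⟩
  obtain rfl : x' = x := Subtype.ext (hx'v.trans hxv.symm)
  have huy : G.Adj u y := (adj_or_adj_of_contractEdge_adj hxv (hs hx hy hxy)).resolve_left hvy
  have hvy' : G.Adj v y' := (adj_or_adj_of_contractEdge_adj hxv (hs hx hy' hxy')).resolve_right huy'
  have hyv : y.1 ≠ v := fun h => hxy (Subtype.ext (hxv.trans h.symm))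
  have hy'v : y'.1 ≠ v := fun h => hxy' (Subtype.ext (hxv.trans h.symm))
  have hyy' : y ≠ y' := by rintro rfl; exact huy' huy
  have hyy'_adj : G.Adj y y' := adj_of_contractEdge_adj_of_ne hyv hy'v (hs hy hy' hyy')
  -- `u y y' v` is a 4-cycle whose chords `u y'` and `y v` are missing
  rcases adj_or_adj_of_not_isIndSubgraph_cycleGraph_four hC4 huy hyy'_adj hvy'.symm huv.symm
    y'.2.symm hyv with h | h
  exacts [huy' h, hvy h.symm]

theorem exists_isNClique_of_contractEdge (hC4 : ¬ (cycleGraph 4).IsIndSubgraph G)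
    (huv : G.Adj u v) {n : ℕ} {s : Finset {x : V // x ≠ u}}
    (hs : (G.contractEdge u v).IsNClique n s) :
    ∃ t : Finset V, G.IsNClique n t ∧ (u ∉ t ∨ v ∉ t) := by
  classical
  rcases forall_adj_or_forall_adj_of_contractEdge hC4 huv hs.1 with h | h
  · exact ⟨_, IsNClique.map_of_comap ⟨isClique_comap_subtype_of_contractEdge hs.1 h, hs.2⟩,
      Or.inl (by simp)⟩
  · exact ⟨_, IsNClique.map_of_comap ⟨isClique_comap_swap_of_contractEdge hs.1 h, hs.2⟩,
      Or.inr (by simp [Equiv.swap_apply_eq_iff])⟩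

variable [Finite V]

theorem cliqueNum_contractEdge_le (hC4 : ¬ (cycleGraph 4).IsIndSubgraph G) (huv : G.Adj u v) :
    (G.contractEdge u v).cliqueNum ≤ G.cliqueNum := by
  obtain ⟨s, hs⟩ := (G.contractEdge u v).exists_isNClique_cliqueNum
  obtain ⟨t, ht, -⟩ := exists_isNClique_of_contractEdge hC4 huv hs
  exact ht.card_eq ▸ ht.isClique.card_le_cliqueNum

variable (G u v) in
theorem cliqueNum_sub_one_le_cliqueNum_contractEdge :
    G.cliqueNum - 1 ≤ (G.contractEdge u v).cliqueNum := by
  classical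
  obtain ⟨S, hS⟩ := G.exists_isNClique_cliqueNum
  have hclique : (G.contractEdge u v).IsClique (S.subtype (· ≠ u) : Set {x : V // x ≠ u}) :=
    fun x hx y hy hxy => comap_subtype_le_contractEdge G
      (hS.1 (mem_subtype.1 hx) (mem_subtype.1 hy) (Subtype.val_injective.ne hxy))
  calc G.cliqueNum - 1 = #S - 1 := by rw [hS.card_eq]
    _ ≤ #(S.erase u) := pred_card_le_card_erase
    _ = #(S.subtype (· ≠ u)) := by rw [card_subtype, filter_ne']
    _ ≤ (G.contractEdge u v).cliqueNum := hclique.card_le_cliqueNum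

end SimpleGraph

/-- For a `C4`-free graph `G` and an edge `uv`, `ω(G/uv) ≤ ω(G)`; and if every
maximum clique of `G` contains both `u` and `v`, then `ω(G/uv) = ω(G) - 1`. -/
theorem stmt8 {V : Type*} [Fintype V] (G : SimpleGraph V)
    (hC4 : ¬ (cycleGraph 4).IsIndSubgraph G) (u v : V) (huv : G.Adj u v) :
    (G.contractEdge u v).cliqueNum ≤ G.cliqueNum ∧
      ((∀ s : Finset V, G.IsNClique G.cliqueNum s → u ∈ s ∧ v ∈ s) →
        (G.contractEdge u v).cliqueNum = G.cliqueNum - 1) := by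
  refine ⟨cliqueNum_contractEdge_le hC4 huv, fun hmax => ?_⟩
  have hne : (G.contractEdge u v).cliqueNum ≠ G.cliqueNum := by
    intro h
    obtain ⟨s, hs⟩ := (G.contractEdge u v).exists_isNClique_cliqueNum
    obtain ⟨t, ht, hmiss⟩ := exists_isNClique_of_contractEdge hC4 huv hs
    obtain ⟨hu, hv⟩ := hmax t (h ▸ ht)
    exact hmiss.elim (· hu) (· hv)
  have := cliqueNum_contractEdge_le hC4 huv
  have := cliqueNum_sub_one_le_cliqueNum_contractEdge G u v
  omega
end
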